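/- Consider ℝ^n with the sup-metric d_∞(x,y) = max_{1≤j≤n} |x_j − y_j| and basepoint 0. A function h : ℝ^n → ℝ is a horofunction of (ℝ^n, d_∞) if and only if there exist a non-empty set J ⊆ {1,…,n}, signs ε_j ∈ {−1,+1} for j ∈ J, and α ∈ ℝ^J with min_{j∈J} α_j = 0 such that h(x) = max_{j∈J} (ε_j x_j − α_j) for all x ∈ ℝ^n. Moreover, every horofunction of (ℝ^n, d_∞) is a Busemann point. -/

import Mathlib

open Filter Topology

noncomputable section

/-- `horo b y z = d(z,y) - d(b,y)`, the function `h_y` with basepoint `b`. -/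
def horo {M : Type*} [MetricSpace M] (b y z : M) : ℝ := dist z y - dist b y

/-- `HoroLim b y h` : the functions `h_{y^n}` (with basepoint `b`) converge pointwise to `h`. -/
def HoroLim {M : Type*} [MetricSpace M] (b : M) (y : ℕ → M) (h : M → ℝ) : Prop :=
  ∀ z : M, Filter.Tendsto (fun n => horo b (y n) z) Filter.atTop (nhds (h z))

/-- `h` is a horofunction of `(M,d)` with basepoint `b`. -/
def IsHorofunction {M : Type*} [MetricSpace M] (b : M) (h : M → ℝ) : Prop :=
  (∃ y : ℕ → M, HoroLim b y h) ∧ ∀ y : M, h ≠ horo b y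

/-- A metric space is geodesic: any two points are joined by a geodesic path. -/
def IsGeodesicSpace (M : Type*) [MetricSpace M] : Prop :=
  ∀ x y : M, ∃ γ : ℝ → M, γ 0 = x ∧ γ (dist x y) = y ∧
    ∀ s ∈ Set.Icc (0 : ℝ) (dist x y), ∀ t ∈ Set.Icc (0 : ℝ) (dist x y),
      dist (γ s) (γ t) = |s - t|

/-- Almost geodesic sequence. -/
def IsAlmostGeodesicSeq {M : Type*} [MetricSpace M] (y : ℕ → M) : Prop :=
  Filter.Tendsto (fun n => dist (y n) (y 0)) Filter.atTop Filter.atTop ∧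
  ∀ ε > (0 : ℝ), ∃ N : ℕ, ∀ m k : ℕ, N ≤ k → k ≤ m →
    dist (y m) (y k) + dist (y k) (y 0) - dist (y m) (y 0) < ε

/-- A Busemann point: a horofunction that is the limit of an almost geodesic sequence. -/
def IsBusemannPoint {M : Type*} [MetricSpace M] (b : M) (h : M → ℝ) : Prop :=
  IsHorofunction b h ∧ ∃ y : ℕ → M, IsAlmostGeodesicSeq y ∧ HoroLim b y h

/-- Detour cost `H(h₁,h₂)`, with values in `EReal` (so it may be `⊤ = ∞`). -/
def detourCost {M : Type*} [MetricSpace M] (b : M) (h₁ h₂ : M → ℝ) : EReal :=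
  ⨅ z : {z : ℕ → M // HoroLim b z h₁},
    Filter.liminf (fun n => ((dist b (z.1 n) + h₂ (z.1 n) : ℝ) : EReal)) Filter.atTop

/-- Detour distance `δ(h₁,h₂) = H(h₁,h₂) + H(h₂,h₁)`. -/
def detourDist {M : Type*} [MetricSpace M] (b : M) (h₁ h₂ : M → ℝ) : EReal :=
  detourCost b h₁ h₂ + detourCost b h₂ h₁

/-!
On `(ι → ℝ, d_∞)` one has `h_y(z) = max_j ((|z_j - y_j| - |y_j|) - (‖y‖ - |y_j|))`. For a
horofunction `h = lim h_{y^k}` properness forces `‖y^k‖ → ∞`; along a subsequence every gap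
`‖y^k‖ - |y^k_j|` tends to some `α_j ∈ [0, ∞]` and every coordinate `y^k_j` converges in `EReal`.
Coordinates with `α_j = ∞` drop out of the maximum; for the others `|y^k_j| → ∞`, so the first
bracket is eventually `ε_j z_j` with `ε_j = ±1`. A coordinate attaining `‖y^k‖` infinitely often
has `α_j = 0`.

Conversely, `x ↦ max_{j ∈ J} (ε_j x_j - α_j)` is the Busemann function of an explicit geodesic ray.
The limit `h` of any almost geodesic sequence satisfies `h(y^k) → -∞`, whereas every `h_w` is
bounded below by `-d(b, w)`; so `h` is a Busemann point.
-/

open Finset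

section General

variable {M : Type*} [MetricSpace M] {b : M} {y : ℕ → M} {h : M → ℝ}

lemma neg_dist_le_horo (b w z : M) : -dist b w ≤ horo b w z := by
  unfold horo
  linarith [dist_nonneg (x := z) (y := w)]

lemma continuous_horo (b z : M) : Continuous fun w => horo b w z :=
  (continuous_const.dist continuous_id).sub (continuous_const.dist continuous_id)

lemma HoroLim.comp_strictMono (hy : HoroLim b y h) {φ : ℕ → ℕ} (hφ : StrictMono φ) :
    HoroLim b (y ∘ φ) h :=
  fun z => (hy z).comp hφ.tendsto_atTop

lemma HoroLim.tendsto_dist_atTop [ProperSpace M] (hy : HoroLim b y h)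
    (hh : ∀ w, h ≠ horo b w) : Tendsto (fun k => dist b (y k)) atTop atTop := by
  by_contra hR
  obtain ⟨C, hC⟩ : ∃ C, ∃ᶠ k in atTop, dist b (y k) < C := by
    simpa [tendsto_atTop, Filter.not_eventually, Filter.frequently_atTop] using hR
  obtain ⟨φ, hφ, hφC⟩ := extraction_of_frequently_atTop hC
  obtain ⟨a, -, ψ, hψ, ha⟩ := (isCompact_closedBall b C).tendsto_subseq
    fun k => Metric.mem_closedBall'.2 (hφC k).le
  exact hh a <| funext fun z => tendsto_nhds_unique (hy.comp_strictMono (hφ.comp hψ) z)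
    (((continuous_horo b z).tendsto a).comp ha)

lemma IsAlmostGeodesicSeq.tendsto_atBot (hy : IsAlmostGeodesicSeq y) (hlim : HoroLim b y h) :
    Tendsto (fun k => h (y k)) atTop atBot := by
  obtain ⟨N, hN⟩ := hy.2 1 one_pos
  have hbound : ∀ k ≥ N, h (y k) ≤ 1 + dist b (y 0) - dist (y k) (y 0) := by
    intro k hk
    refine le_of_tendsto (hlim (y k)) ((eventually_ge_atTop k).mono fun m hm => ?_)
    have hgeod := hN m k hk hm
    have htri := dist_triangle (y m) b (y 0)
    unfold horo
    rw [dist_comm (y k), dist_comm b]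
    linarith
  refine tendsto_atBot_mono' atTop ((eventually_ge_atTop N).mono hbound) ?_
  simpa only [sub_eq_add_neg, Function.comp_def] using
    tendsto_atBot_add_const_left atTop _ (tendsto_neg_atTop_atBot.comp hy.1)

lemma IsAlmostGeodesicSeq.isBusemannPoint (hy : IsAlmostGeodesicSeq y) (hlim : HoroLim b y h) :
    IsBusemannPoint b h := by
  refine ⟨⟨⟨y, hlim⟩, fun w hw => ?_⟩, y, hy, hlim⟩
  obtain ⟨k, hk⟩ := ((hy.tendsto_atBot hlim).eventually_lt_atBot (-dist b w)).exists
  exact hk.not_ge (hw ▸ neg_dist_le_horo b w (y k))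

lemma Isometry.isAlmostGeodesicSeq (hy : Isometry y) : IsAlmostGeodesicSeq y := by
  have hdist : ∀ m k, k ≤ m → dist (y m) (y k) = m - k := fun m k hkm => by
    rw [hy.dist_eq, Nat.dist_eq, abs_of_nonneg (sub_nonneg.2 (Nat.cast_le.2 hkm))]
  refine ⟨?_, fun ε hε => ⟨0, fun m k _ hkm => ?_⟩⟩
  · simpa [hdist _ 0 (Nat.zero_le _)] using tendsto_natCast_atTop_atTop
  · rw [hdist m k hkm, hdist k 0 k.zero_le, hdist m 0 m.zero_le]
    linarith

end General

section RealSequences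

variable {α : Type*} {l : Filter α} {u R : α → ℝ}

lemma Finset.tendsto_sup'_of_tendsto_atBot {ι : Type*} {s J : Finset ι} (hs : s.Nonempty)
    (hJ : J.Nonempty) (hJs : J ⊆ s) {f : ι → α → ℝ} {g : ι → ℝ}
    (hfJ : ∀ i ∈ J, Tendsto (f i) l (𝓝 (g i))) (hf : ∀ i ∈ s, i ∉ J → Tendsto (f i) l atBot) :
    Tendsto (fun a => s.sup' hs (f · a)) l (𝓝 (J.sup' hJ g)) := by
  have hlimJ := Tendsto.finset_sup'_nhds_apply hJ hfJ
  have hlow : ∀ᶠ a in l, J.sup' hJ g - 1 < J.sup' hJ (f · a) :=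
    hlimJ.eventually (eventually_gt_nhds (sub_one_lt _))
  have hoff : ∀ᶠ a in l, ∀ i ∈ s, i ∉ J → f i a ≤ J.sup' hJ g - 1 :=
    (s.eventually_all).2 fun i hi => by
      by_cases hiJ : i ∈ J
      · exact .of_forall fun _ h => absurd hiJ h
      · exact ((hf i hi hiJ).eventually_le_atBot _).mono fun _ h _ => h
  refine hlimJ.congr' ((hlow.and hoff).mono fun a ⟨hlow, hoff⟩ => ?_)
  refine le_antisymm (sup'_mono _ hJs hJ) (sup'_le _ _ fun i hi => ?_)
  by_cases hiJ : i ∈ J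
  · exact le_sup' (f · a) hiJ
  · exact (hoff i hi hiJ).trans hlow.le

lemma tendsto_abs_sub_sub_atBot (z : ℝ) (hgap : Tendsto (fun k => R k - |u k|) l atTop) :
    Tendsto (fun k => |z - u k| - R k) l atBot := by
  refine tendsto_atBot_mono (fun k => ?_)
    (tendsto_atBot_add_const_left l |z| (tendsto_neg_atTop_atBot.comp hgap))
  have := abs_sub z (u k)
  simp only [Function.comp_apply]
  linarith

/-- As `|u k| → ∞`, `u` tends to `+∞` or `-∞`, and then `|z - u k| - |u k|` is eventually `-z`
or `z`. -/
lemma tendsto_abs_sub_sub_of_tendsto_ereal [l.NeBot] {β : EReal} {a : ℝ} (z : ℝ)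
    (hu : Tendsto (fun k => (u k : EReal)) l (𝓝 β)) (hgap : Tendsto (fun k => R k - |u k|) l (𝓝 a))
    (hR : Tendsto R l atTop) :
    Tendsto (fun k => |z - u k| - R k) l (𝓝 ((if β = ⊤ then -1 else 1) * z - a)) := by
  have habs : Tendsto (fun k => |u k|) l atTop :=
    (hR.atTop_add hgap.neg).congr fun k => by ring
  suffices hfirst : ∀ᶠ k in l, |z - u k| - |u k| = (if β = ⊤ then -1 else 1) * z by
    refine ((tendsto_const_nhds.congr' (hfirst.mono fun _ h => h.symm)).sub hgap).congr
      fun k => by ring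
  induction β using EReal.rec with
  | bot =>
    filter_upwards [(EReal.tendsto_coe_nhds_bot_iff.1 hu).eventually_le_atBot (-|z|)] with k hk
    rw [abs_of_nonneg (by linarith [neg_abs_le z]), abs_of_nonpos (by linarith [abs_nonneg z])]
    simp
  | coe x =>
    exact absurd habs (not_tendsto_atTop_of_tendsto_nhds (EReal.tendsto_coe.1 hu).abs)
  | top =>
    filter_upwards [(EReal.tendsto_coe_nhds_top_iff.1 hu).eventually_ge_atTop |z|] with k hk
    rw [abs_of_nonpos (by linarith [le_abs_self z]), abs_of_nonneg (by linarith [abs_nonneg z])]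
    simp

end RealSequences

section SupMetric

variable {ι : Type*} [Fintype ι]

lemma dist_pi_eq_sup' {X : ι → Type*} [∀ i, PseudoMetricSpace (X i)] [Nonempty ι]
    (x y : ∀ i, X i) : dist x y = univ.sup' univ_nonempty fun i => dist (x i) (y i) :=
  le_antisymm (dist_pi_le_iff'.2 fun i => le_sup' (fun i => dist (x i) (y i)) (mem_univ i))
    (sup'_le _ _ fun i _ => dist_le_pi_dist x y i)

lemma exists_dist_apply_eq_dist {X : ι → Type*} [∀ i, PseudoMetricSpace (X i)] [Nonempty ι]
    (x y : ∀ i, X i) : ∃ i, dist (x i) (y i) = dist x y := by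
  obtain ⟨i, -, hi⟩ := exists_mem_eq_sup' univ_nonempty fun i => dist (x i) (y i)
  exact ⟨i, by rw [← hi, dist_pi_eq_sup']⟩

lemma abs_apply_le_dist_zero (y : ι → ℝ) (j : ι) : |y j| ≤ dist 0 y := by
  simpa [Real.dist_eq] using dist_le_pi_dist 0 y j

lemma horo_zero_eq_sup' [Nonempty ι] (y z : ι → ℝ) :
    horo 0 y z = univ.sup' univ_nonempty fun j => |z j - y j| - dist 0 y := by
  simp only [horo, dist_pi_eq_sup' z y, Real.dist_eq, sub_eq_add_neg, sup'_add]

lemma exists_sup'_eq_of_tendsto_ereal [Nonempty ι] {u : ℕ → ι → ℝ} {h : (ι → ℝ) → ℝ}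
    {β γ : ι → EReal} (hu : HoroLim 0 u h) (hR : Tendsto (fun k => dist 0 (u k)) atTop atTop)
    (hβ : ∀ j, Tendsto (fun k => (u k j : EReal)) atTop (𝓝 (β j)))
    (hγ : ∀ j, Tendsto (fun k => ((dist 0 (u k) - |u k j| : ℝ) : EReal)) atTop (𝓝 (γ j))) :
    ∃ (J : Finset ι) (hJ : J.Nonempty) (ε : ι → ℝ) (α : ι → ℝ),
      (∀ j ∈ J, ε j = 1 ∨ ε j = -1) ∧
      (∀ j ∈ J, 0 ≤ α j) ∧ (∃ j ∈ J, α j = 0) ∧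
      ∀ x : ι → ℝ, h x = J.sup' hJ fun j => ε j * x j - α j := by
  classical
  have hγ_nonneg : ∀ j, 0 ≤ γ j := fun j => ge_of_tendsto' (hγ j) fun k =>
    EReal.coe_nonneg.2 (sub_nonneg.2 (abs_apply_le_dist_zero (u k) j))
  obtain ⟨j₀, hj₀⟩ : ∃ j, γ j = 0 := by
    have hmax : ∀ k, ∃ j, dist 0 (u k) - |u k j| = 0 := fun k => by
      obtain ⟨j, hj⟩ := exists_dist_apply_eq_dist 0 (u k)
      exact ⟨j, by simp [← hj, Real.dist_eq]⟩
    obtain ⟨j, hj⟩ := frequently_exists.1 (Frequently.of_forall (f := atTop) hmax)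
    exact ⟨j, tendsto_nhds_unique_of_frequently_eq (hγ j) tendsto_const_nhds
      (hj.mono fun k hk => by rw [hk, EReal.coe_zero])⟩
  set J := univ.filter fun j => γ j ≠ ⊤
  have hJ : J.Nonempty := ⟨j₀, by simp [J, hj₀]⟩
  refine ⟨J, hJ, fun j => if β j = ⊤ then -1 else 1, fun j => (γ j).toReal,
    fun j _ => by dsimp only; split_ifs <;> simp, fun j _ => EReal.toReal_nonneg (hγ_nonneg j),
    ⟨j₀, by simp [J, hj₀], by simp [hj₀]⟩, fun z => ?_⟩
  refine tendsto_nhds_unique (hu z) ?_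
  simp only [horo_zero_eq_sup']
  refine tendsto_sup'_of_tendsto_atBot _ hJ (subset_univ J) (fun j hj => ?_) fun j _ hj => ?_
  · have hgap : Tendsto (fun k => dist 0 (u k) - |u k j|) atTop (𝓝 (γ j).toReal) := by
      rw [← EReal.tendsto_coe, EReal.coe_toReal (by simpa [J] using hj)
        (ne_bot_of_le_ne_bot (by simp) (hγ_nonneg j))]
      exact hγ j
    exact tendsto_abs_sub_sub_of_tendsto_ereal (z j) (hβ j) hgap hR
  · have hγ_top : γ j = ⊤ := by simpa [J] using hj
    exact tendsto_abs_sub_sub_atBot (z j) (EReal.tendsto_coe_nhds_top_iff.1 (hγ_top ▸ hγ j))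

theorem IsHorofunction.exists_sup'_eq {h : (ι → ℝ) → ℝ} (hh : IsHorofunction 0 h) :
    ∃ (J : Finset ι) (hJ : J.Nonempty) (ε : ι → ℝ) (α : ι → ℝ),
      (∀ j ∈ J, ε j = 1 ∨ ε j = -1) ∧
      (∀ j ∈ J, 0 ≤ α j) ∧ (∃ j ∈ J, α j = 0) ∧
      ∀ x : ι → ℝ, h x = J.sup' hJ fun j => ε j * x j - α j := by
  obtain ⟨⟨y, hy⟩, hne⟩ := hh
  have hR := hy.tendsto_dist_atTop hne
  have : Nonempty ι := by
    by_contra hι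
    rw [not_nonempty_iff] at hι
    obtain ⟨k, hk⟩ := (hR.eventually_gt_atTop 0).exists
    exact hk.ne' (dist_eq_zero.2 (Subsingleton.elim _ _))
  obtain ⟨L, -, φ, hφ, hL⟩ := isCompact_univ.tendsto_subseq (x := fun k (j : ι) =>
    ((y k j : EReal), ((dist 0 (y k) - |y k j| : ℝ) : EReal))) fun _ => Set.mem_univ _
  exact exists_sup'_eq_of_tendsto_ereal (hy.comp_strictMono hφ) (hR.comp hφ.tendsto_atTop)
    (fun j => (tendsto_pi_nhds.1 hL j).fst_nhds) fun j => (tendsto_pi_nhds.1 hL j).snd_nhds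

end SupMetric

section Ray

variable {ι : Type*} {J : Finset ι} {ε α : ι → ℝ}

/-- A geodesic ray whose Busemann function is `x ↦ J.sup' (ε j * x j - α j)`, when every `ε j = ±1`
and `min_{j ∈ J} α j = 0`. -/
def horoRay (J : Finset ι) (ε α : ι → ℝ) (k : ℕ) : ι → ℝ :=
  (J : Set ι).indicator fun j => -ε j * max ((k : ℝ) - α j) 0

lemma abs_sub_neg_mul_of_sign {e x t : ℝ} (he : e = 1 ∨ e = -1) (hx : |x| ≤ t) :
    |x - -e * t| = e * x + t := by
  rcases he with rfl | rfl
  · rw [abs_of_nonneg (by linarith [neg_abs_le x])]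
    ring
  · rw [abs_of_nonpos (by linarith [le_abs_self x])]
    ring

lemma horoRay_zero (hα : ∀ j ∈ J, 0 ≤ α j) : horoRay J ε α 0 = 0 := by
  ext j
  by_cases hj : j ∈ J
  · simp [horoRay, hj, hα j hj]
  · simp [horoRay, hj]

lemma isometry_horoRay [Fintype ι] (hε : ∀ j ∈ J, ε j = 1 ∨ ε j = -1) {j₀ : ι} (hj₀ : j₀ ∈ J)
    (hα₀ : α j₀ = 0) : Isometry (horoRay J ε α) := by
  have habs_ε : ∀ j ∈ J, |ε j| = 1 := fun j hj => by rcases hε j hj with h | h <;> simp [h]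
  refine Isometry.of_dist_eq fun m k => le_antisymm
    ((dist_pi_le_iff dist_nonneg).2 fun j => ?_) ?_
  · by_cases hj : j ∈ J
    · simp only [horoRay, Finset.mem_coe, hj, Set.indicator_of_mem, Real.dist_eq, Nat.dist_eq]
      rw [← mul_sub, abs_mul, abs_neg, habs_ε j hj, one_mul]
      exact (abs_max_sub_max_le_abs _ _ 0).trans_eq (by rw [sub_sub_sub_cancel_right])
    · simp [horoRay, hj]
  · calc dist m k = dist (horoRay J ε α m j₀) (horoRay J ε α k j₀) := by
          simp [horoRay, hj₀, hα₀, Real.dist_eq, Nat.dist_eq, ← mul_sub, abs_mul, habs_ε j₀ hj₀]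
      _ ≤ _ := dist_le_pi_dist _ _ j₀

lemma horoLim_horoRay [Fintype ι] {h : (ι → ℝ) → ℝ} (hJ : J.Nonempty)
    (hε : ∀ j ∈ J, ε j = 1 ∨ ε j = -1) (hα : ∀ j ∈ J, 0 ≤ α j) {j₀ : ι} (hj₀ : j₀ ∈ J)
    (hα₀ : α j₀ = 0) (hh : ∀ x, h x = J.sup' hJ fun j => ε j * x j - α j) : HoroLim 0 (horoRay J ε α) h := by
  intro z
  have hdist_zero : ∀ k : ℕ, dist 0 (horoRay J ε α k) = k := fun k => by
    rw [← horoRay_zero hα, (isometry_horoRay hε hj₀ hα₀).dist_eq, Nat.dist_eq]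
    simp
  have hz_lower : -|z j₀| ≤ h z := by
    rw [hh]
    refine le_trans ?_ (le_sup' (fun j => ε j * z j - α j) hj₀)
    rcases hε j₀ hj₀ with he | he <;>
      simp only [he, hα₀] <;> linarith [neg_abs_le (z j₀), le_abs_self (z j₀)]
  have hlarge : ∀ᶠ k : ℕ in atTop, ∀ j, |z j| + |z j₀| + |α j| ≤ k :=
    eventually_all.2 fun j => tendsto_natCast_atTop_atTop.eventually_ge_atTop _
  refine tendsto_const_nhds.congr' (hlarge.mono fun k hk => ?_)
  have hcoord : ∀ j ∈ J, |z j - horoRay J ε α k j| = ε j * z j - α j + k := fun j hj => by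
    have hk := hk j
    simp only [horoRay, Finset.mem_coe, hj, Set.indicator_of_mem]
    rw [max_eq_left (by linarith [abs_nonneg (z j), abs_nonneg (z j₀), le_abs_self (α j)]),
      abs_sub_neg_mul_of_sign (hε j hj) (by linarith [abs_nonneg (z j₀), le_abs_self (α j)])]
    ring
  have hdist : dist z (horoRay J ε α k) = k + h z := by
    have hnonneg : 0 ≤ (k : ℝ) + h z := by linarith [hk j₀, abs_nonneg (α j₀)]
    refine le_antisymm ((dist_pi_le_iff hnonneg).2 fun j => ?_) ?_
    · rw [Real.dist_eq]
      by_cases hj : j ∈ J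
      · rw [hcoord j hj, hh]
        linarith [le_sup' (fun j => ε j * z j - α j) hj]
      · simp only [horoRay, Finset.mem_coe, hj, not_false_eq_true, Set.indicator_of_notMem,
          sub_zero]
        linarith [hk j, abs_nonneg (α j)]
    · obtain ⟨j, hj, hjmax⟩ := exists_mem_eq_sup' hJ fun j => ε j * z j - α j
      calc (k : ℝ) + h z = dist (z j) (horoRay J ε α k j) := by
            rw [Real.dist_eq, hcoord j hj, hh, hjmax]
            ring
        _ ≤ _ := dist_le_pi_dist _ _ j
  change h z = dist z _ - dist 0 _
  rw [hdist, hdist_zero]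
  ring

theorem isBusemannPoint_of_eq_sup' [Fintype ι] {h : (ι → ℝ) → ℝ} (hJ : J.Nonempty)
    (hε : ∀ j ∈ J, ε j = 1 ∨ ε j = -1) (hα : ∀ j ∈ J, 0 ≤ α j) (hmin : ∃ j ∈ J, α j = 0)
    (hh : ∀ x, h x = J.sup' hJ fun j => ε j * x j - α j) : IsBusemannPoint 0 h := by
  obtain ⟨j₀, hj₀, hα₀⟩ := hmin
  exact (isometry_horoRay hε hj₀ hα₀).isAlmostGeodesicSeq.isBusemannPoint
    (horoLim_horoRay hJ hε hα hj₀ hα₀ hh)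

end Ray

/-- horofunctions of (ℝ^n, d_∞) with basepoint 0 are exactly the functions
x ↦ max_{j∈J} (ε_j x_j − α_j) with J ≠ ∅, ε_j ∈ {±1}, min_{j∈J} α_j = 0; all are Busemann. -/
theorem stmt_15 (n : ℕ) :
    (∀ h : (Fin n → ℝ) → ℝ,
      IsHorofunction (0 : Fin n → ℝ) h ↔
        ∃ (J : Finset (Fin n)) (hJ : J.Nonempty) (ε : Fin n → ℝ) (α : Fin n → ℝ),
          (∀ j ∈ J, ε j = 1 ∨ ε j = -1) ∧
          (∀ j ∈ J, 0 ≤ α j) ∧ (∃ j ∈ J, α j = 0) ∧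
          ∀ x : Fin n → ℝ, h x = J.sup' hJ fun j => ε j * x j - α j) ∧
    (∀ h : (Fin n → ℝ) → ℝ, IsHorofunction (0 : Fin n → ℝ) h →
      IsBusemannPoint (0 : Fin n → ℝ) h) := by
  refine ⟨fun h => ⟨IsHorofunction.exists_sup'_eq, ?_⟩, fun h hh => ?_⟩
  · rintro ⟨J, hJ, ε, α, hε, hα, hmin, hh⟩
    exact (isBusemannPoint_of_eq_sup' hJ hε hα hmin hh).1
  · obtain ⟨J, hJ, ε, α, hε, hα, hmin, hh⟩ := hh.exists_sup'_eq
    exact isBusemannPoint_of_eq_sup' hJ hε hα hmin hh
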